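/- arXiv:2009.14702 — 2 statements merged into one kernel-verified Lean document; each statement's English description precedes it below -/
import Mathlib

section
/- Let U : X → ℝ on a finite set X with |X| = K, min_x U(x) = 0, B = min{U(x) : U(x) ≠ 0} > 0, k = |{x : U(x) = 0}|, and for β ≥ 0 let ρ_β(x) = exp(-β U(x))/Z_β with Z_β = ∑_y exp(-β U(y)). Then for any 0 ≤ β_n ≤ β_{n+1} and any x with U(x) = 0, |ρ_{β_n}(x) - ρ_{β_{n+1}}(x)| ≤ 2(K - k) exp(-β_n B). -/
open Finset Real

theorem stmt_5 {X : Type*} [Fintype X] [Nonempty X] (U : X → ℝ)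
    (hU0 : ∀ x, 0 ≤ U x) (hmin : ∃ x, U x = 0)
    (B : ℝ) (hB : IsLeast {v : ℝ | ∃ x, U x = v ∧ U x ≠ 0} B) (hBpos : 0 < B)
    (K k : ℕ) (hK : K = Fintype.card X)
    (hk : k = (univ.filter fun x => U x = 0).card)
    (ρ : ℝ → X → ℝ)
    (hρ : ∀ β x, ρ β x = Real.exp (-β * U x) / ∑ z, Real.exp (-β * U z))
    (βn βn1 : ℝ) (hβn : 0 ≤ βn) (hle : βn ≤ βn1)
    (x : X) (hx : U x = 0) :
    |ρ βn x - ρ βn1 x| ≤ 2 * (K - k : ℝ) * Real.exp (-βn * B) := by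
  classical
  set T : Finset X := univ.filter (fun z => ¬ U z = 0) with hT
  set S : ℝ → ℝ := fun β => ∑ z ∈ T, Real.exp (-β * U z) with hS
  have hsplit : ∀ β, (∑ z, Real.exp (-β * U z)) = k + S β := by
    intro β
    rw [← Finset.sum_filter_add_sum_filter_not univ (fun z => U z = 0)]
    congr 1
    rw [Finset.sum_congr rfl (fun z hz => ?_), Finset.sum_const, nsmul_eq_mul, mul_one, hk]
    rw [Finset.mem_filter] at hz
    rw [hz.2, mul_zero, Real.exp_zero]
  have hk1 : (1:ℝ) ≤ k := by
    have : 0 < (univ.filter fun x => U x = 0).card := by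
      obtain ⟨y, hy⟩ := hmin
      exact Finset.card_pos.mpr ⟨y, Finset.mem_filter.mpr ⟨Finset.mem_univ _, hy⟩⟩
    rw [hk]; exact_mod_cast this
  have hSnonneg : ∀ β, 0 ≤ S β := fun β =>
    Finset.sum_nonneg fun z _ => (Real.exp_pos _).le
  have hZ1 : ∀ β, (1:ℝ) ≤ k + S β := fun β => by linarith [hSnonneg β]
  have hZpos : ∀ β, (0:ℝ) < k + S β := fun β => lt_of_lt_of_le one_pos (hZ1 β)
  -- S is antitone between βn and βn1
  have hmono : S βn1 ≤ S βn := by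
    apply Finset.sum_le_sum
    intro z _
    apply Real.exp_le_exp.mpr
    nlinarith [hU0 z]
  -- bound S βn
  have hcard : (T.card : ℝ) = (K - k : ℝ) := by
    have := Finset.card_filter_add_card_filter_not (s := univ) (p := fun z => U z = 0)
    rw [hk, hK, ← hT] at *
    have h2 : (univ.filter fun x => U x = 0).card + T.card = Fintype.card X := by
      simpa [hT] using this
    push_cast [← h2, hk]
    ring
  have hSbound : S βn ≤ (K - k : ℝ) * Real.exp (-βn * B) := by
    rw [← hcard]
    calc S βn ≤ ∑ _z ∈ T, Real.exp (-βn * B) := by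
          apply Finset.sum_le_sum
          intro z hz
          apply Real.exp_le_exp.mpr
          have hz' : U z ≠ 0 := (Finset.mem_filter.mp hz).2
          have hBz : B ≤ U z := hB.2 ⟨z, rfl, hz'⟩
          nlinarith
      _ = (T.card : ℝ) * Real.exp (-βn * B) := by
          rw [Finset.sum_const, nsmul_eq_mul]
  -- compute ρ values
  simp only [hρ, hx, mul_zero, Real.exp_zero, hsplit]
  have h1 : 1 / ((k:ℝ) + S βn) - 1 / ((k:ℝ) + S βn1)
      = (S βn1 - S βn) / (((k:ℝ) + S βn) * ((k:ℝ) + S βn1)) := by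
    rw [div_sub_div _ _ (hZpos βn).ne' (hZpos βn1).ne']
    ring
  have habs : |(1:ℝ) / ((k:ℝ) + S βn) - 1 / ((k:ℝ) + S βn1)|
      = (S βn - S βn1) / (((k:ℝ) + S βn) * ((k:ℝ) + S βn1)) := by
    rw [h1, abs_div, abs_of_nonneg (by positivity : (0:ℝ) ≤ ((k:ℝ) + S βn) * ((k:ℝ) + S βn1)),
      abs_of_nonpos (by linarith : S βn1 - S βn ≤ 0)]
    ring
  rw [habs]
  have hden : (1:ℝ) ≤ ((k:ℝ) + S βn) * ((k:ℝ) + S βn1) := by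
    nlinarith [hZ1 βn, hZ1 βn1]
  have hnum : S βn - S βn1 ≤ (K - k : ℝ) * Real.exp (-βn * B) := by
    linarith [hSnonneg βn1]
  calc (S βn - S βn1) / (((k:ℝ) + S βn) * ((k:ℝ) + S βn1))
      ≤ S βn - S βn1 := div_le_self (by linarith) hden
    _ ≤ (K - k : ℝ) * Real.exp (-βn * B) := hnum
    _ ≤ 2 * (K - k : ℝ) * Real.exp (-βn * B) := by
        nlinarith [Real.exp_pos (-βn * B), hSnonneg βn, hSbound]
end

section
/- Combining the two cases: for a finite set X, U : X → ℝ with min U = 0, B the smallest nonzero value of U, k = |{U = 0}|, K = |X|, and 0 ≤ β ≤ β', the sup-norm difference of the Gibbs measures satisfies ‖ρ_β - ρ_{β'}‖_∞ ≤ 2(K - k) exp(-β B), assuming k < K (so B exists). -/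
open Finset Real

theorem stmt_7 {X : Type*} [Fintype X] [Nonempty X] (U : X → ℝ)
    (hU0 : ∀ x, 0 ≤ U x) (hmin : ∃ x, U x = 0)
    (B : ℝ) (hB : IsLeast {v : ℝ | ∃ x, U x = v ∧ U x ≠ 0} B)
    (K k : ℕ) (hK : K = Fintype.card X)
    (hk : k = (univ.filter fun x => U x = 0).card)
    (hkK : k < K)
    (ρ : ℝ → X → ℝ)
    (hρ : ∀ β x, ρ β x = Real.exp (-β * U x) / ∑ z, Real.exp (-β * U z))
    (β β' : ℝ) (hβ : 0 ≤ β) (hle : β ≤ β') :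
    ∀ x, |ρ β x - ρ β' x| ≤ 2 * (K - k : ℝ) * Real.exp (-β * B) := by
  classical
  have hk1 : 1 ≤ k := by
    rw [hk]
    obtain ⟨x0, hx0⟩ := hmin
    exact Finset.card_pos.mpr ⟨x0, by simp [hx0]⟩
  have hkR : (1:ℝ) ≤ (k:ℝ) := by exact_mod_cast hk1
  obtain ⟨x0, hx0B, hx0ne⟩ := hB.1
  have hB0 : 0 ≤ B := hx0B ▸ hU0 x0
  have hKk : (1:ℝ) ≤ (K:ℝ) - (k:ℝ) := by
    have : (k:ℝ) + 1 ≤ (K:ℝ) := by exact_mod_cast hkK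
    linarith
  have hcardc : ((univ.filter fun x => ¬ U x = 0).card : ℝ) = (K:ℝ) - (k:ℝ) := by
    rw [Finset.filter_not, Finset.card_sdiff_of_subset (Finset.filter_subset _ _), Finset.card_univ,
      ← hK, ← hk, Nat.cast_sub hkK.le]
  have aux : ∀ γ, 0 ≤ γ → ∀ x,
      |ρ γ x - (if U x = 0 then 1/(k:ℝ) else 0)| ≤ ((K:ℝ)-(k:ℝ)) * Real.exp (-γ*B) := by
    intro γ hγ x
    set S : ℝ := ∑ z ∈ univ.filter (fun z => ¬ U z = 0), Real.exp (-γ * U z) with hSdef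
    have hS0 : 0 ≤ S := Finset.sum_nonneg fun z _ => (Real.exp_pos _).le
    have hSle : S ≤ ((K:ℝ)-(k:ℝ)) * Real.exp (-γ*B) := by
      calc S ≤ ∑ z ∈ univ.filter (fun z => ¬ U z = 0), Real.exp (-γ*B) := by
            apply Finset.sum_le_sum
            intro z hz
            apply Real.exp_le_exp.mpr
            have hBz : B ≤ U z := hB.2 ⟨z, rfl, (Finset.mem_filter.mp hz).2⟩
            nlinarith
        _ = ((K:ℝ)-(k:ℝ)) * Real.exp (-γ*B) := by
            rw [Finset.sum_const, nsmul_eq_mul, hcardc]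
    have hZ : (∑ z, Real.exp (-γ * U z)) = (k:ℝ) + S := by
      rw [← Finset.sum_filter_add_sum_filter_not univ (fun z => U z = 0)]
      congr 1
      have h1 : ∑ z ∈ univ.filter (fun z => U z = 0), Real.exp (-γ * U z)
           = ∑ _z ∈ univ.filter (fun z => U z = 0), (1:ℝ) := by
        apply Finset.sum_congr rfl
        intro z hz
        simp [(Finset.mem_filter.mp hz).2]
      rw [h1, Finset.sum_const, nsmul_eq_mul, mul_one, hk]
    have hZ1 : (1:ℝ) ≤ (k:ℝ) + S := by linarith
    rw [hρ, hZ]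
    by_cases hx : U x = 0
    · rw [if_pos hx, hx]
      simp only [mul_zero, Real.exp_zero]
      have heq : 1/((k:ℝ)+S) - 1/(k:ℝ) = -(S/((k:ℝ)*((k:ℝ)+S))) := by
        field_simp
        ring
      rw [one_div] at heq ⊢
      rw [heq, abs_neg, abs_of_nonneg (by positivity)]
      calc S/((k:ℝ)*((k:ℝ)+S)) ≤ S := div_le_self hS0 (by nlinarith)
        _ ≤ ((K:ℝ)-(k:ℝ)) * Real.exp (-γ*B) := hSle
    · rw [if_neg hx, sub_zero]
      rw [abs_of_nonneg (by positivity)]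
      have hBx : B ≤ U x := hB.2 ⟨x, rfl, hx⟩
      calc Real.exp (-γ * U x) / ((k:ℝ) + S) ≤ Real.exp (-γ * U x) :=
            div_le_self (Real.exp_pos _).le hZ1
        _ ≤ Real.exp (-γ * B) := Real.exp_le_exp.mpr (by nlinarith)
        _ ≤ ((K:ℝ)-(k:ℝ)) * Real.exp (-γ*B) := by nlinarith [Real.exp_pos (-γ*B)]
  intro x
  have h1 := aux β hβ x
  have h2 := aux β' (hβ.trans hle) x
  have h3 : Real.exp (-β' * B) ≤ Real.exp (-β * B) :=
    Real.exp_le_exp.mpr (by nlinarith)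
  have h4 : |ρ β x - ρ β' x| ≤ |ρ β x - (if U x = 0 then 1/(k:ℝ) else 0)|
      + |ρ β' x - (if U x = 0 then 1/(k:ℝ) else 0)| := by
    rw [abs_sub_comm (ρ β' x)]
    exact abs_sub_le _ _ _
  have hE : 0 ≤ ((K:ℝ)-(k:ℝ)) := by linarith
  nlinarith [mul_le_mul_of_nonneg_left h3 hE]
end
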